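/- For two unrelated machines, the sequential price of stability is at most n/2 + 1: for every instance P on 2 machines and n jobs there exists an order σ of the players such that every subgame perfect equilibrium of the sequential game with order σ has makespan at most (n/2 + 1)·OPT(P). -/

import Mathlib

open Classical Finset

noncomputable section

/-- Load of machine `i` given the list `s` of machine choices of jobs `0, 1, …`. -/
def mLoad (P : ℕ → Fin 2 → ℝ) (s : List (Fin 2)) (i : Fin 2) : ℝ :=
  ∑ j ∈ Finset.range s.length, if s.getD j 0 = i then P j i else 0

/-- Makespan of a full list of choices. -/
def lMk (P : ℕ → Fin 2 → ℝ) (s : List (Fin 2)) : ℝ :=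
  max (mLoad P s 0) (mLoad P s 1)

/-- Extend the history `h` to a full play of the `n`-player sequential game by
following the strategy profile `σ`. -/
def play (σ : List (Fin 2) → Fin 2) (n : ℕ) (h : List (Fin 2)) : List (Fin 2) :=
  if hl : n ≤ h.length then h else play σ n (h ++ [σ h])
termination_by n - h.length
decreasing_by simp [List.length_append]; omega

/-- `σ` is a subgame perfect equilibrium of the `n`-player sequential game on
instance `P` (players move in order `0, …, n − 1`; at every history, the moving
player cannot improve the final load of her own machine by deviating). -/
def IsSPE (P : ℕ → Fin 2 → ℝ) (n : ℕ) (σ : List (Fin 2) → Fin 2) : Prop :=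
  ∀ h : List (Fin 2), h.length < n → ∀ c : Fin 2,
    mLoad P (play σ n (h ++ [σ h])) (σ h) ≤ mLoad P (play σ n (h ++ [c])) c

/-- Load of machine `i` under schedule `s` for the first `n` jobs. -/
def fLoad (P : ℕ → Fin 2 → ℝ) (n : ℕ) (s : ℕ → Fin 2) (i : Fin 2) : ℝ :=
  ∑ j ∈ Finset.range n, if s j = i then P j i else 0

/-- Makespan of schedule `s`. -/
def fMk (P : ℕ → Fin 2 → ℝ) (n : ℕ) (s : ℕ → Fin 2) : ℝ :=
  max (fLoad P n s 0) (fLoad P n s 1)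

/-- Optimal makespan. -/
def optMk (P : ℕ → Fin 2 → ℝ) (n : ℕ) : ℝ := ⨅ s : ℕ → Fin 2, fMk P n s

/-- The instance `P` with the jobs reordered according to the permutation `σ`:
the `j`-th player to move is job `σ(j)`. -/
def permP (n : ℕ) (P : ℕ → Fin 2 → ℝ) (σ : Equiv.Perm (Fin n)) : ℕ → Fin 2 → ℝ :=
  fun j i => if h : j < n then P ((σ ⟨j, h⟩ : Fin n) : ℕ) i else 0

/-!
Order the players so that the `k ≤ n / 2` jobs that an optimal schedule puts on its less used
machine `α` move first, followed by the jobs it puts on the other machine `β`; the two blocks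
then have loads `A, B ≤ OPT` on `α` and `β` respectively. In an SPE, a player choosing `α`
could have deviated to `β`, so the final load of `α` never exceeds the larger of the current
load of `α` and the current load of `β` plus all remaining processing times on `β`. Backwards induction over
the first block then bounds the final load of `β` by `max A B + (k - 1) B ≤ k OPT`, and
hence the final load of `α` by `max A (k OPT + B) ≤ (k + 1) OPT ≤ (n / 2 + 1) OPT`.
-/

theorem fin_two_eq_or_eq_of_ne {α β : Fin 2} (hαβ : α ≠ β) (c : Fin 2) : c = α ∨ c = β := by
  revert α β c; decide

@[elab_as_elim]
theorem history_induction {ι : Type*} (k : ℕ) {motive : List ι → Prop}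
    (done : ∀ h, k ≤ h.length → motive h)
    (step : ∀ h, h.length < k → (∀ c, motive (h ++ [c])) → motive h) (h : List ι) :
    motive h := by
  induction hd : k - h.length generalizing h with
  | zero => exact done h (by omega)
  | succ d ih => exact step h (by omega) fun c => ih _ (by simp; omega)

section Loads

variable {P : ℕ → Fin 2 → ℝ}

@[simp]
theorem mLoad_nil (i : Fin 2) : mLoad P [] i = 0 := by
  simp [mLoad]

theorem mLoad_append (h : List (Fin 2)) (c i : Fin 2) :
    mLoad P (h ++ [c]) i = mLoad P h i + if c = i then P h.length i else 0 := by
  unfold mLoad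
  rw [List.length_append, List.length_singleton, sum_range_succ,
    List.getD_append_right _ _ _ _ le_rfl]
  congr 1
  · exact sum_congr rfl fun j hj => by rw [List.getD_append _ _ _ _ (mem_range.mp hj)]
  · simp

@[simp]
theorem mLoad_append_self (h : List (Fin 2)) (i : Fin 2) :
    mLoad P (h ++ [i]) i = mLoad P h i + P h.length i := by
  simp [mLoad_append]

theorem mLoad_append_of_ne (h : List (Fin 2)) {c i : Fin 2} (hci : c ≠ i) :
    mLoad P (h ++ [c]) i = mLoad P h i := by
  simp [mLoad_append, hci]

theorem mLoad_append_le (hP : ∀ j i, 0 ≤ P j i) (h : List (Fin 2)) (c i : Fin 2) :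
    mLoad P (h ++ [c]) i ≤ mLoad P h i + P h.length i := by
  rw [mLoad_append]
  split_ifs
  · rfl
  · linarith [hP h.length i]

theorem mLoad_le_mLoad_append (hP : ∀ j i, 0 ≤ P j i) (h : List (Fin 2)) (c i : Fin 2) :
    mLoad P h i ≤ mLoad P (h ++ [c]) i := by
  rw [mLoad_append]
  split_ifs
  · linarith [hP h.length i]
  · rw [add_zero]

theorem lMk_eq_max_of_ne (s : List (Fin 2)) {α β : Fin 2} (hαβ : α ≠ β) :
    lMk P s = max (mLoad P s α) (mLoad P s β) := by
  fin_cases α <;> fin_cases β <;> simp_all [lMk, max_comm]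

theorem fMk_eq_max_of_ne (n : ℕ) (s : ℕ → Fin 2) {α β : Fin 2} (hαβ : α ≠ β) :
    fMk P n s = max (fLoad P n s α) (fLoad P n s β) := by
  fin_cases α <;> fin_cases β <;> simp_all [fMk, max_comm]

end Loads

section Play

variable {P : ℕ → Fin 2 → ℝ} {n : ℕ} (τ : List (Fin 2) → Fin 2)

theorem play_of_length_ge {h : List (Fin 2)} (hh : n ≤ h.length) : play τ n h = h := by
  rw [play, dif_pos hh]

theorem play_of_length_lt {h : List (Fin 2)} (hh : h.length < n) :
    play τ n h = play τ n (h ++ [τ h]) := by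
  rw [play, dif_neg (not_le.mpr hh)]

theorem mLoad_le_mLoad_play (hP : ∀ j i, 0 ≤ P j i) (h : List (Fin 2)) (i : Fin 2) :
    mLoad P h i ≤ mLoad P (play τ n h) i := by
  induction h using history_induction n with
  | done h hh => rw [play_of_length_ge τ hh]
  | step h hh ih =>
    rw [play_of_length_lt τ hh]
    exact (mLoad_le_mLoad_append hP h (τ h) i).trans (ih _)

theorem mLoad_play_le (hP : ∀ j i, 0 ≤ P j i) (h : List (Fin 2)) (i : Fin 2) :
    mLoad P (play τ n h) i ≤ mLoad P h i + ∑ j ∈ Ico h.length n, P j i := by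
  induction h using history_induction n with
  | done h hh => rw [play_of_length_ge τ hh, Ico_eq_empty_of_le hh, sum_empty, add_zero]
  | step h hh ih =>
    rw [play_of_length_lt τ hh, sum_eq_sum_Ico_succ_bot hh]
    have := mLoad_append_le hP h (τ h) i
    simp only [List.length_append, List.length_singleton] at ih
    linarith [ih (τ h)]

end Play

/-- The makespan of completing `h` by putting the rest of the first `k` jobs on `α` and the
other jobs on `β`. -/
def blockCompletionMk (P : ℕ → Fin 2 → ℝ) (n k : ℕ) (α β : Fin 2) (h : List (Fin 2)) : ℝ :=
  max (mLoad P h α + ∑ j ∈ Ico h.length k, P j α) (mLoad P h β + ∑ j ∈ Ico k n, P j β)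

theorem blockCompletionMk_append_self {P : ℕ → Fin 2 → ℝ} {n k : ℕ} {α β : Fin 2}
    (hαβ : α ≠ β) {h : List (Fin 2)} (hk : h.length < k) :
    blockCompletionMk P n k α β (h ++ [α]) = blockCompletionMk P n k α β h := by
  rw [blockCompletionMk, blockCompletionMk, mLoad_append_self, mLoad_append_of_ne _ hαβ,
    List.length_append, List.length_singleton, add_assoc, sum_eq_sum_Ico_succ_bot hk]

namespace IsSPE

variable {P : ℕ → Fin 2 → ℝ} {n k : ℕ} {τ : List (Fin 2) → Fin 2} {α β : Fin 2}

theorem mLoad_play_le_deviation (hτ : IsSPE P n τ) {h : List (Fin 2)} (hh : h.length < n)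
    (c : Fin 2) : mLoad P (play τ n h) (τ h) ≤ mLoad P (play τ n (h ++ [c])) c := by
  rw [play_of_length_lt τ hh]
  exact hτ h hh c

theorem mLoad_play_le_max (hP : ∀ j i, 0 ≤ P j i) (hτ : IsSPE P n τ) (hαβ : α ≠ β)
    (h : List (Fin 2)) :
    mLoad P (play τ n h) α ≤ max (mLoad P h α) (mLoad P h β + ∑ j ∈ Ico h.length n, P j β) := by
  induction h using history_induction n with
  | done h hh => rw [play_of_length_ge τ hh]; exact le_max_left _ _
  | step h hh ih =>
    rw [sum_eq_sum_Ico_succ_bot hh, ← add_assoc, ← mLoad_append_self]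
    rcases fin_two_eq_or_eq_of_ne hαβ (τ h) with hα | hβ
    · calc mLoad P (play τ n h) α ≤ mLoad P (play τ n (h ++ [β])) β :=
            hα ▸ hτ.mLoad_play_le_deviation hh β
        _ ≤ mLoad P (h ++ [β]) β + ∑ j ∈ Ico (h.length + 1) n, P j β := by
            simpa using mLoad_play_le τ hP (h ++ [β]) β
        _ ≤ _ := le_max_right _ _
    · rw [play_of_length_lt τ hh, hβ]
      simpa [mLoad_append_of_ne _ hαβ.symm] using ih β

theorem mLoad_play_le_max_of_length_le (hP : ∀ j i, 0 ≤ P j i) (hτ : IsSPE P n τ)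
    (hαβ : α ≠ β) (hkn : k ≤ n) (h : List (Fin 2)) (hk : h.length ≤ k) :
    mLoad P (play τ n h) α ≤ max (mLoad P h α + ∑ j ∈ Ico h.length k, P j α)
      (mLoad P (play τ n h) β + ∑ j ∈ Ico k n, P j β) := by
  induction h using history_induction k with
  | done h hh =>
    obtain rfl : h.length = k := le_antisymm hk hh
    rw [Ico_self, sum_empty, add_zero]
    refine (hτ.mLoad_play_le_max hP hαβ h).trans (max_le_max le_rfl ?_)
    gcongr
    exact mLoad_le_mLoad_play τ hP h β
  | step h hh ih =>
    rw [play_of_length_lt τ (hh.trans_le hkn)]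
    refine (ih (τ h) (by simpa)).trans (max_le_max ?_ le_rfl)
    have := mLoad_append_le hP h (τ h) α
    rw [sum_eq_sum_Ico_succ_bot hh, List.length_append, List.length_singleton]
    linarith

theorem mLoad_play_le_blockCompletionMk (hP : ∀ j i, 0 ≤ P j i) (hτ : IsSPE P n τ)
    (hαβ : α ≠ β) (hkn : k ≤ n) {h : List (Fin 2)} (hk : h.length + 1 = k) :
    mLoad P (play τ n h) β ≤ blockCompletionMk P n k α β h := by
  have hh : h.length < n := by omega
  have hα : (h ++ [α]).length = k := by simpa
  rw [← blockCompletionMk_append_self hαβ (by omega : h.length < k), blockCompletionMk, hα,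
    Ico_self, sum_empty, add_zero]
  rcases fin_two_eq_or_eq_of_ne hαβ (τ h) with hτα | hτβ
  · rw [play_of_length_lt τ hh, hτα, ← hα]
    exact (mLoad_play_le τ hP _ β).trans (le_max_right _ _)
  · calc mLoad P (play τ n h) β ≤ mLoad P (play τ n (h ++ [α])) α :=
          hτβ ▸ hτ.mLoad_play_le_deviation hh α
      _ ≤ _ := by simpa [hα] using hτ.mLoad_play_le_max hP hαβ (h ++ [α])

theorem mLoad_play_le_blockCompletionMk_add (hP : ∀ j i, 0 ≤ P j i) (hτ : IsSPE P n τ)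
    (hαβ : α ≠ β) (hkn : k ≤ n) (h : List (Fin 2)) (hk : h.length < k) :
    mLoad P (play τ n h) β ≤
      blockCompletionMk P n k α β h + (k - h.length - 1 : ℕ) * ∑ j ∈ Ico k n, P j β := by
  induction h using history_induction (k - 1) with
  | done h hh =>
    rw [show k - h.length - 1 = 0 by omega, Nat.cast_zero, zero_mul, add_zero]
    exact mLoad_play_le_blockCompletionMk hP hτ hαβ hkn (by omega)
  | step h hh ih =>
    set B := ∑ j ∈ Ico k n, P j β
    have hB : 0 ≤ B := sum_nonneg fun j _ => hP j β
    have hh' : h.length < n := by omega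
    have ihα := ih α (by simp; omega)
    rw [blockCompletionMk_append_self hαβ hk, List.length_append, List.length_singleton,
      show k - (h.length + 1) - 1 = k - h.length - 1 - 1 by omega] at ihα
    have hcoef : ((k - h.length - 1 - 1 : ℕ) : ℝ) + 1 = (k - h.length - 1 : ℕ) := by
      rw [← Nat.cast_add_one, Nat.sub_add_cancel (by omega)]
    have hfirst : mLoad P (h ++ [α]) α + ∑ j ∈ Ico (h ++ [α]).length k, P j α ≤
        blockCompletionMk P n k α β h :=
      blockCompletionMk_append_self hαβ hk ▸ le_max_left _ _
    have hrest : 0 ≤ ((k - h.length - 1 - 1 : ℕ) : ℝ) * B := by positivity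
    rw [← hcoef, add_one_mul, ← add_assoc]
    rcases fin_two_eq_or_eq_of_ne hαβ (τ h) with hτα | hτβ
    · rw [play_of_length_lt τ hh', hτα]
      linarith
    · calc mLoad P (play τ n h) β ≤ mLoad P (play τ n (h ++ [α])) α :=
            hτβ ▸ hτ.mLoad_play_le_deviation hh' α
        _ ≤ _ := hτ.mLoad_play_le_max_of_length_le hP hαβ hkn _ (by simp; omega)
        _ ≤ _ := max_le (by linarith) (by linarith)

end IsSPE

theorem IsSPE.lMk_play_le {P : ℕ → Fin 2 → ℝ} {n k : ℕ} {τ : List (Fin 2) → Fin 2} {α β : Fin 2}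
    (hP : ∀ j i, 0 ≤ P j i) (hτ : IsSPE P n τ) (hαβ : α ≠ β) (hkn : k ≤ n) :
    lMk P (play τ n []) ≤ (k + 1) * max (∑ j ∈ range k, P j α) (∑ j ∈ Ico k n, P j β) := by
  have hB : 0 ≤ ∑ j ∈ Ico k n, P j β := sum_nonneg fun j _ => hP j β
  rw [lMk_eq_max_of_ne _ hαβ]
  rcases Nat.eq_zero_or_pos k with rfl | hk
  · have hα := hτ.mLoad_play_le_max hP hαβ []
    have hβ := mLoad_play_le (n := n) τ hP [] β
    simp only [mLoad_nil, List.length_nil, zero_add] at hα hβ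
    rw [Nat.cast_zero, zero_add, one_mul]
    exact max_le (hα.trans (max_le (hB.trans (le_max_right _ _)) (le_max_right _ _)))
      (hβ.trans (le_max_right _ _))
  · have hβ := hτ.mLoad_play_le_blockCompletionMk_add hP hαβ hkn [] hk
    have hα := hτ.mLoad_play_le_max_of_length_le hP hαβ hkn [] (Nat.zero_le k)
    rw [blockCompletionMk, List.length_nil, ← range_eq_Ico, mLoad_nil, mLoad_nil, zero_add,
      zero_add, Nat.sub_zero, Nat.cast_pred hk] at hβ
    rw [mLoad_nil, List.length_nil, ← range_eq_Ico, zero_add] at hα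
    generalize ∑ j ∈ range k, P j α = A at *
    generalize ∑ j ∈ Ico k n, P j β = B at *
    have hAT : A ≤ max A B := le_max_left _ _
    have hBT : B ≤ max A B := le_max_right _ _
    have hβ' : mLoad P (play τ n []) β ≤ k * max A B := by
      have := mul_le_mul_of_nonneg_left hBT (sub_nonneg.mpr (Nat.one_le_cast.mpr hk))
      linarith
    have hT : 0 ≤ (k : ℝ) * max A B := by positivity
    exact max_le (hα.trans (max_le (by linarith) (by linarith))) (by linarith)

theorem fMk_nonneg {P : ℕ → Fin 2 → ℝ} (hP : ∀ j i, 0 ≤ P j i) (n : ℕ) (s : ℕ → Fin 2) :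
    0 ≤ fMk P n s :=
  le_max_of_le_left (sum_nonneg fun j _ => by split_ifs <;> simp [hP])

theorem exists_fMk_eq_optMk {P : ℕ → Fin 2 → ℝ} (hP : ∀ j i, 0 ≤ P j i) (n : ℕ) :
    ∃ s : ℕ → Fin 2, fMk P n s = optMk P n := by
  -- `fMk P n s` only sees `s` on `range n`, so it suffices to minimise over `Fin n → Fin 2`
  let ext (v : Fin n → Fin 2) (j : ℕ) : Fin 2 := if h : j < n then v ⟨j, h⟩ else 0
  have hext (s : ℕ → Fin 2) : fMk P n (ext fun j => s j) = fMk P n s := by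
    simp only [fMk, fLoad]
    congr 1 <;> exact sum_congr rfl fun j hj => by simp [ext, mem_range.mp hj]
  obtain ⟨v, hv⟩ := Finite.exists_min fun v => fMk P n (ext v)
  refine ⟨ext v, le_antisymm (le_ciInf fun s => (hv fun j => s j).trans (hext s).le) ?_⟩
  exact ciInf_le ⟨0, by rintro _ ⟨s, rfl⟩; exact fMk_nonneg hP n s⟩ _

theorem exists_ne_two_mul_card_le (n : ℕ) (s : ℕ → Fin 2) :
    ∃ α β : Fin 2, α ≠ β ∧ 2 * #{j : Fin n | s j = α} ≤ n := by
  have hsplit := card_filter_add_card_filter_not (s := (univ : Finset (Fin n)))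
    (fun j : Fin n => s j = 0)
  have h1 : #{j : Fin n | ¬s j = 0} = #{j : Fin n | s j = 1} := by
    congr 1; ext j; simp only [mem_filter, mem_univ, true_and]; omega
  rw [h1, card_univ, Fintype.card_fin] at hsplit
  by_cases h0 : 2 * #{j : Fin n | s j = 0} ≤ n
  · exact ⟨0, 1, by decide, h0⟩
  · exact ⟨1, 0, by decide, by omega⟩

theorem exists_perm_iff_lt_card {n : ℕ} (p : Fin n → Prop) [DecidablePred p] :
    ∃ σ : Equiv.Perm (Fin n), ∀ j, p (σ j) ↔ (j : ℕ) < #{x | p x} := by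
  set k := #{x | p x}
  have hk : Fintype.card {x // p x} = k := by rw [Fintype.card_subtype]
  have hk' : Fintype.card {x // ¬p x} = n - k := by
    rw [Fintype.card_subtype_compl, hk, Fintype.card_fin]
  let e : Fin n ≃ Fin (k + (n - k)) :=
    (Equiv.sumCompl p).symm.trans <| ((Fintype.equivFinOfCardEq hk).sumCongr
      (Fintype.equivFinOfCardEq hk')).trans finSumFinEquiv
  have hkn : k + (n - k) = n := Nat.add_sub_cancel' (card_le_univ _ |>.trans (by simp))
  refine ⟨(e.trans (finCongr hkn)).symm, fun j => ?_⟩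
  obtain ⟨x, rfl⟩ := (e.trans (finCongr hkn)).surjective j
  rw [Equiv.symm_apply_apply]
  by_cases hx : p x <;> simp [e, hx, Equiv.sumCompl]

section Reorder

variable {P : ℕ → Fin 2 → ℝ} {n : ℕ}

theorem permP_nonneg (hP : ∀ j i, 0 ≤ P j i) (σ : Equiv.Perm (Fin n)) (j : ℕ) (i : Fin 2) :
    0 ≤ permP n P σ j i := by
  unfold permP
  split_ifs
  exacts [hP _ _, le_rfl]

theorem sum_filter_permP (σ : Equiv.Perm (Fin n)) (s : ℕ → Fin 2) (q : ℕ → Prop) (i : Fin 2)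
    (hq : ∀ j : Fin n, q j ↔ s (σ j) = i) :
    ∑ j ∈ (range n).filter q, permP n P σ j i = fLoad P n s i := by
  rw [sum_filter, fLoad, ← Fin.sum_univ_eq_sum_range, ← Fin.sum_univ_eq_sum_range,
    ← Equiv.sum_comp σ fun x : Fin n => if s x = i then P x i else 0]
  refine sum_congr rfl fun j _ => ?_
  simp [permP, hq j]

theorem max_sum_permP_eq_fMk (σ : Equiv.Perm (Fin n)) (s : ℕ → Fin 2) {α β : Fin 2} {k : ℕ}
    (hαβ : α ≠ β) (hσ : ∀ j : Fin n, s (σ j) = α ↔ (j : ℕ) < k) (hkn : k ≤ n) :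
    max (∑ j ∈ range k, permP n P σ j α) (∑ j ∈ Ico k n, permP n P σ j β) = fMk P n s := by
  rw [fMk_eq_max_of_ne n s hαβ, ← sum_filter_permP σ s (· < k) α fun j => (hσ j).symm,
    ← sum_filter_permP σ s (k ≤ ·) β fun j => ?_]
  · congr 2 <;> ext j <;> simp only [mem_Ico, mem_range, mem_filter] <;> omega
  · rw [← not_lt, ← hσ j]
    rcases fin_two_eq_or_eq_of_ne hαβ (s (σ j)) with h | h <;> simp [h, hαβ, hαβ.symm]

end Reorder

/-- For two unrelated machines the sequential price of stability is at most
`n/2 + 1`: for every instance there is an order of the players such that every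
subgame perfect equilibrium of the sequential game in that order has makespan
at most `(n/2 + 1) · OPT`. -/
theorem spos_le_half_n_plus_one :
    ∀ (n : ℕ) (P : ℕ → Fin 2 → ℝ), (∀ j i, 0 ≤ P j i) →
      ∃ σ : Equiv.Perm (Fin n),
        ∀ τ : List (Fin 2) → Fin 2, IsSPE (permP n P σ) n τ →
          lMk (permP n P σ) (play τ n []) ≤ ((n : ℝ)/2 + 1) * optMk P n := by
  intro n P hP
  obtain ⟨s, hs⟩ := exists_fMk_eq_optMk hP n
  obtain ⟨α, β, hαβ, hk⟩ := exists_ne_two_mul_card_le n s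
  obtain ⟨σ, hσ⟩ := exists_perm_iff_lt_card fun j : Fin n => s j = α
  set k := #{j : Fin n | s j = α}
  have hkn : k ≤ n := by omega
  refine ⟨σ, fun τ hτ => ?_⟩
  calc lMk (permP n P σ) (play τ n []) ≤ (k + 1) * optMk P n := by
        rw [← hs, ← max_sum_permP_eq_fMk σ s hαβ hσ hkn]
        exact hτ.lMk_play_le (permP_nonneg hP σ) hαβ hkn
    _ ≤ ((n : ℝ) / 2 + 1) * optMk P n := by
        gcongr
        · exact hs ▸ fMk_nonneg hP n s
        · rw [le_div_iff₀ two_pos]; exact_mod_cast (by omega : k * 2 ≤ n)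

end
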